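/- Let m ≥ 1, let Ψ be a set of pairs of probability measures on ℝ^m, let ε > 0, Δ > 0, and let v ∈ ℝ^m be a unit vector (‖v‖₂ = 1). Suppose that for every pair (μᵢ, μⱼ) ∈ Ψ there exist a scalar α ∈ ℝ with |α| ≤ Δ such that μᵢ is the pushforward of μⱼ under the translation x ↦ x + αv (i.e., μᵢ is a translation of μⱼ by a vector parallel to v of Euclidean norm at most Δ). Let ζ_v be the law of Y·v where Y is a one-dimensional Laplace random variable with scale Δ/ε (i.e., ζ_v is the pushforward of the Laplace(Δ/ε) measure on ℝ under y ↦ y·v). Then the additive-noise mechanism with noise ζ_v satisfies (ε, 0)-distribution privacy with respect to Ψ: for every pair (μᵢ, μⱼ) ∈ Ψ and every measurable S ⊆ ℝ^m, (μᵢ ∗ ζ_v)(S) ≤ e^ε · (μⱼ ∗ ζ_v)(S). -/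

import Mathlib

open MeasureTheory ProbabilityTheory

/-- Convolution of two measures on `ℝ^m`: the law of `X + Z` with `X ∼ μ`, `Z ∼ ν` independent. -/
noncomputable def mconv {m : ℕ} (μ ν : Measure (Fin m → ℝ)) : Measure (Fin m → ℝ) :=
  (μ.prod ν).map (fun p => p.1 + p.2)

/-- The Euclidean (`L²`) norm on `ℝ^m`. -/
noncomputable def l2norm {m : ℕ} (x : Fin m → ℝ) : ℝ := Real.sqrt (∑ k, (x k) ^ 2)

/-- The one-dimensional Laplace measure with scale `b`. -/
noncomputable def lap1 (b : ℝ) : Measure ℝ :=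
  MeasureTheory.volume.withDensity
    (fun y => ENNReal.ofReal ((1 / (2 * b)) * Real.exp (-|y| / b)))

open scoped ENNReal

/-! Shifting the input by `α • v` and then adding the noise `Y • v` is the same as adding the
noise shifted by `α • v`, and on the line `ℝ • v` that is the Laplace law shifted by `α`. By the
triangle inequality the Laplace density `f` of scale `b` satisfies
`f y ≤ exp (|α| / b) * f (α + y)`, so the shifted law is at most `exp (|α| / b) ≤ exp ε` times the
unshifted one, as measures; convolving with the input preserves this inequality. -/

theorem mconv_eq_conv {m : ℕ} (μ ν : Measure (Fin m → ℝ)) : mconv μ ν = μ ∗ ν := rfl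

namespace MeasureTheory.Measure

section Convolution

variable {M : Type*} [AddMonoid M] [MeasurableSpace M] [MeasurableAdd₂ M]

theorem map_add_right_conv (μ ν : Measure M) [SFinite ν] (a : M) :
    μ.map (· + a) ∗ ν = μ ∗ ν.map (a + ·) := by
  refine ext_of_lintegral _ fun f hf ↦ ?_
  have hinner : Measurable fun x ↦ ∫⁻ y, f (x + y) ∂ν :=
    (hf.comp measurable_add).lintegral_prod_right'
  rw [lintegral_conv hf, lintegral_conv hf, lintegral_map hinner (measurable_add_const a)]
  refine lintegral_congr fun x ↦ ?_
  simp only [add_assoc]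
  exact (lintegral_map (hf.comp (measurable_const_add x)) (measurable_const_add a)).symm

theorem conv_mono_right (μ : Measure M) {ν ρ : Measure M} [SFinite ρ] (h : ν ≤ ρ) :
    μ ∗ ν ≤ μ ∗ ρ :=
  map_mono (prod_mono le_rfl h) measurable_add

theorem map_add_right_conv_le (μ ν : Measure M) [SFinite ν] {a : M} {c : ℝ≥0∞}
    (h : ν.map (a + ·) ≤ c • ν) : μ.map (· + a) ∗ ν ≤ c • (μ ∗ ν) := by
  rw [map_add_right_conv, ← conv_smul_right]
  exact conv_mono_right μ h

end Convolution

theorem withDensity_map_add_left_le {G : Type*} [AddGroup G] [MeasurableSpace G] [MeasurableAdd G]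
    (ν : Measure G) [ν.IsAddLeftInvariant] {f : G → ℝ≥0∞} (hf : Measurable f) {a : G} {c : ℝ≥0∞}
    (h : ∀ y, f y ≤ c * f (a + y)) : (ν.withDensity f).map (a + ·) ≤ c • ν.withDensity f := by
  refine le_iff.2 fun T hT ↦ ?_
  have hshift : Measurable (a + · : G → G) := measurable_const_add a
  rw [map_apply hshift hT, withDensity_apply _ (hshift hT), smul_apply, smul_eq_mul,
    withDensity_apply _ hT]
  calc ∫⁻ y in (a + ·) ⁻¹' T, f y ∂ν
      ≤ ∫⁻ y in (a + ·) ⁻¹' T, c * f (a + y) ∂ν := lintegral_mono fun y ↦ h y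
    _ = c * ∫⁻ y in (a + ·) ⁻¹' T, f (a + y) ∂ν := lintegral_const_mul _ (hf.comp hshift)
    _ = c * ∫⁻ y in T, f y ∂ν := by
      rw [← setLIntegral_map hT hf hshift, map_add_left_eq_self]

theorem map_add_smul_map_smul_le {E : Type*} [AddCommGroup E] [Module ℝ E] [MeasurableSpace E]
    [MeasurableAdd E] [MeasurableSMul ℝ E] (ρ : Measure ℝ) (v : E) {a : ℝ} {c : ℝ≥0∞}
    (h : ρ.map (a + ·) ≤ c • ρ) : (ρ.map (· • v)).map (a • v + ·) ≤ c • ρ.map (· • v) := by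
  have hv : Measurable (· • v : ℝ → E) := measurable_id.smul_const v
  rw [map_map (measurable_const_add _) hv, ← Measure.map_smul]
  have hcomm : (a • v + ·) ∘ (· • v) = (· • v) ∘ (a + · : ℝ → ℝ) := by
    ext y; simp [add_smul]
  rw [hcomm, ← map_map hv (measurable_const_add a)]
  exact map_mono h hv

end MeasureTheory.Measure

theorem exp_neg_abs_div_le (b : ℝ) (hb : 0 < b) (a y : ℝ) :
    Real.exp (-|y| / b) ≤ Real.exp (|a| / b) * Real.exp (-|a + y| / b) := by
  rw [← Real.exp_add, Real.exp_le_exp, ← add_div]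
  gcongr
  linarith [abs_add_le a y]

instance (b : ℝ) : SFinite (lap1 b) := by
  unfold lap1; infer_instance

theorem lap1_map_add_le {b : ℝ} (hb : 0 < b) (a : ℝ) :
    (lap1 b).map (a + ·) ≤ ENNReal.ofReal (Real.exp (|a| / b)) • lap1 b := by
  refine Measure.withDensity_map_add_left_le _ (by fun_prop) fun y ↦ ?_
  rw [← ENNReal.ofReal_mul (Real.exp_nonneg _), mul_left_comm]
  gcongr
  exact exp_neg_abs_div_le b hb a y

theorem directional_expected_value_mechanism_general
    (m : ℕ)
    (Ψ : Set (Measure (Fin m → ℝ) × Measure (Fin m → ℝ)))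
    (ε Δ : ℝ) (hε : 0 < ε) (hΔ : 0 < Δ)
    (v : Fin m → ℝ)
    (htrans : ∀ p ∈ Ψ, ∃ α : ℝ, |α| ≤ Δ ∧
      p.1 = p.2.map (fun x => x + α • v)) :
    ∀ p ∈ Ψ, ∀ S : Set (Fin m → ℝ), MeasurableSet S →
      mconv p.1 ((lap1 (Δ / ε)).map (fun y => y • v)) S
        ≤ ENNReal.ofReal (Real.exp ε)
            * mconv p.2 ((lap1 (Δ / ε)).map (fun y => y • v)) S := by
  intro p hp S _
  obtain ⟨α, hα, hshift⟩ := htrans p hp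
  have hb : 0 < Δ / ε := div_pos hΔ hε
  have hexp : Real.exp (|α| / (Δ / ε)) ≤ Real.exp ε := by
    rw [Real.exp_le_exp, div_div_eq_mul_div, div_le_iff₀ hΔ, mul_comm ε]
    gcongr
  have hnoise := Measure.map_add_smul_map_smul_le _ v (lap1_map_add_le hb α)
  calc mconv p.1 ((lap1 (Δ / ε)).map (· • v)) S
      ≤ ENNReal.ofReal (Real.exp (|α| / (Δ / ε))) * mconv p.2 ((lap1 (Δ / ε)).map (· • v)) S := by
        rw [hshift, mconv_eq_conv, mconv_eq_conv]
        exact Measure.map_add_right_conv_le _ _ hnoise S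
    _ ≤ ENNReal.ofReal (Real.exp ε) * mconv p.2 ((lap1 (Δ / ε)).map (· • v)) S := by
        gcongr

/-- **Directional Expected Value Mechanism** (Theorem 4.3): if every pair
`(μᵢ, μⱼ) ∈ Ψ` satisfies `μᵢ = (translation by αv)₊ μⱼ` for some scalar `α` with
`|α| ≤ Δ`, where `v` is a fixed unit vector, then adding noise `Y·v` with
`Y ∼ Laplace(Δ/ε)` gives `(ε, 0)`-distribution privacy with respect to `Ψ`. -/
theorem directional_expected_value_mechanism
    (m : ℕ) (hm : 1 ≤ m)
    (Ψ : Set (Measure (Fin m → ℝ) × Measure (Fin m → ℝ)))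
    (ε Δ : ℝ) (hε : 0 < ε) (hΔ : 0 < Δ)
    (v : Fin m → ℝ) (hv : l2norm v = 1)
    (hprob : ∀ p ∈ Ψ, IsProbabilityMeasure p.1 ∧ IsProbabilityMeasure p.2)
    (htrans : ∀ p ∈ Ψ, ∃ α : ℝ, |α| ≤ Δ ∧
      p.1 = p.2.map (fun x => x + α • v)) :
    ∀ p ∈ Ψ, ∀ S : Set (Fin m → ℝ), MeasurableSet S →
      mconv p.1 ((lap1 (Δ / ε)).map (fun y => y • v)) S
        ≤ ENNReal.ofReal (Real.exp ε)
            * mconv p.2 ((lap1 (Δ / ε)).map (fun y => y • v)) S :=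
  directional_expected_value_mechanism_general m Ψ ε Δ hε hΔ v htrans
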